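/- Let n ≥ 1, Q = 2n+2, and let M be a constant 2n×2n real symmetric positive definite symplectic matrix (M⁻¹ = Jᵗ M J). Then the function Γ_M := φ_M^{−(Q−2)/4}, where φ_M(x,t) = ⟨M⁻¹x,x⟩² + t², satisfies 𝓛_M Γ_M = 0 at every point of ℝ^{2n+1} ∖ {0}; i.e. Γ_M is, away from the origin, a solution of the constant-coefficient Heisenberg operator 𝓛_M. -/

import Mathlib

open MeasureTheory Set Matrix

noncomputable section

/-- Points of the Heisenberg group `ℍⁿ = ℝ^{2n} × ℝ`, written `z = (x, t)`. -/
abbrev Hpt (n : ℕ) := (Fin (2 * n) → ℝ) × ℝ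

/-- The standard symplectic matrix `J = (0, -Iₙ; Iₙ, 0)`. -/
def Jmat (n : ℕ) : Matrix (Fin (2 * n)) (Fin (2 * n)) ℝ :=
  Matrix.of fun i j =>
    if (i : ℕ) + n = (j : ℕ) then (-1 : ℝ) else if (j : ℕ) + n = (i : ℕ) then 1 else 0

/-- The Heisenberg group law `(x,t) ∘ (ξ,τ) = (x + ξ, t + τ + 2⟨Jx, ξ⟩)`. -/
def hmul {n : ℕ} (z w : Hpt n) : Hpt n :=
  (z.1 + w.1, z.2 + w.2 + 2 * ((Jmat n).mulVec z.1 ⬝ᵥ w.1))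

/-- The direction vector of the horizontal vector field `Xᵢ = ∂_{xᵢ} + 2(Jx)ᵢ ∂_t`
at a point with horizontal coordinates `x`. -/
def Xvec {n : ℕ} (x : Fin (2 * n) → ℝ) (i : Fin (2 * n)) : Hpt n :=
  (Pi.single i 1, 2 * (Jmat n).mulVec x i)

/-- The horizontal derivative `Xᵢ ψ`. -/
def Xd {n : ℕ} (i : Fin (2 * n)) (ψ : Hpt n → ℝ) (z : Hpt n) : ℝ :=
  fderiv ℝ ψ z (Xvec z.1 i)

/-- The horizontal gradient `∇_H ψ = (X₁ψ, …, X_{2n}ψ)`. -/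
def gradH {n : ℕ} (ψ : Hpt n → ℝ) (z : Hpt n) : Fin (2 * n) → ℝ := fun i => Xd i ψ z

/-- The operator `𝓛_A ψ = Σ_{i,j} a_{ij}(z) XᵢXⱼψ` for a (variable) coefficient matrix `A`. -/
def Lop {n : ℕ} (A : Hpt n → Matrix (Fin (2 * n)) (Fin (2 * n)) ℝ) (ψ : Hpt n → ℝ)
    (z : Hpt n) : ℝ :=
  ∑ i, ∑ j, A z i j * Xd i (Xd j ψ) z

/-- `φ_M(x,t) = ⟨M⁻¹x, x⟩² + t²`. -/
def phiM {n : ℕ} (M : Matrix (Fin (2 * n)) (Fin (2 * n)) ℝ) (z : Hpt n) : ℝ :=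
  (M⁻¹.mulVec z.1 ⬝ᵥ z.1) ^ 2 + z.2 ^ 2

/-- A matrix `M` is symplectic if `M⁻¹ = Jᵗ M J`. -/
def IsSymplecticMat {n : ℕ} (M : Matrix (Fin (2 * n)) (Fin (2 * n)) ℝ) : Prop :=
  M⁻¹ = (Jmat n)ᵀ * M * Jmat n

/-! With `A = M⁻¹`, `q = ⟨Ax, x⟩` and `φ = q² + t²`, the horizontal gradient is
`∇_H φ = 4q·Ax + 4t·Jx`. Since `M` is symplectic, `Ax` and `Jx` are `M`-orthogonal and both have
`M`-norm `q`, so `⟨M∇_Hφ, ∇_Hφ⟩ = 16qφ`; and `𝓛_M φ = (16 + 8n)q` because `tr(MA) = 2n` and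
`tr(MJ) = 0`. The second-order chain rule `𝓛_M(f ∘ φ) = f''(φ)⟨M∇_Hφ, ∇_Hφ⟩ + f'(φ)𝓛_Mφ` then gives
`𝓛_M φ^r = 8r(2r + n) q φ^(r-1)`, which vanishes for `r = -(Q-2)/4 = -n/2`. -/

open Filter Topology

section Differentiability

variable {𝕜 E ι : Type*} [NontriviallyNormedField 𝕜] [NormedAddCommGroup E] [NormedSpace 𝕜 E]
  [Fintype ι] {f g : E → ι → 𝕜} {x : E}

@[fun_prop]
lemma DifferentiableAt.dotProduct (hf : DifferentiableAt 𝕜 f x) (hg : DifferentiableAt 𝕜 g x) :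
    DifferentiableAt 𝕜 (fun y => f y ⬝ᵥ g y) x := by
  simp only [_root_.dotProduct]
  fun_prop

@[fun_prop]
lemma DifferentiableAt.mulVec (B : Matrix ι ι 𝕜) (hf : DifferentiableAt 𝕜 f x) :
    DifferentiableAt 𝕜 (fun y => B *ᵥ f y) x :=
  differentiableAt_pi.2 fun i => (differentiableAt_const (B i)).dotProduct hf

end Differentiability

section HorizontalCalculus

variable {n : ℕ} {ψ χ : Hpt n → ℝ} {z : Hpt n} (i : Fin (2 * n))

lemma Xd_congr (h : ψ =ᶠ[𝓝 z] χ) : Xd i ψ z = Xd i χ z := by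
  simp only [Xd, h.fderiv_eq]

lemma Xd_add (hψ : DifferentiableAt ℝ ψ z) (hχ : DifferentiableAt ℝ χ z) :
    Xd i (fun w => ψ w + χ w) z = Xd i ψ z + Xd i χ z := by
  simp [Xd, fderiv_fun_add hψ hχ]

lemma Xd_mul (hψ : DifferentiableAt ℝ ψ z) (hχ : DifferentiableAt ℝ χ z) :
    Xd i (fun w => ψ w * χ w) z = Xd i ψ z * χ z + ψ z * Xd i χ z := by
  simp only [Xd, fderiv_fun_mul hψ hχ, _root_.add_apply, _root_.smul_apply, smul_eq_mul]
  ring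

lemma Xd_const_mul (c : ℝ) (hψ : DifferentiableAt ℝ ψ z) :
    Xd i (fun w => c * ψ w) z = c * Xd i ψ z := by
  simp [Xd, fderiv_const_mul hψ]

lemma Xd_sum {ι : Type*} (s : Finset ι) {f : ι → Hpt n → ℝ}
    (hf : ∀ k ∈ s, DifferentiableAt ℝ (f k) z) :
    Xd i (fun w => ∑ k ∈ s, f k w) z = ∑ k ∈ s, Xd i (f k) z := by
  simp [Xd, fderiv_fun_sum hf]

lemma Xd_comp {f : ℝ → ℝ} {f' : ℝ} (hf : HasDerivAt f f' (ψ z)) (hψ : DifferentiableAt ℝ ψ z) :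
    Xd i (fun w => f (ψ w)) z = f' * Xd i ψ z := by
  change fderiv ℝ (f ∘ ψ) z _ = _
  rw [(hf.comp_hasFDerivAt z hψ.hasFDerivAt).fderiv]
  rfl

lemma Xd_continuousLinearMap (L : Hpt n →L[ℝ] ℝ) : Xd i L z = L (Xvec z.1 i) := by
  simp [Xd]

lemma Xd_fst_apply (k : Fin (2 * n)) :
    Xd i (fun w => w.1 k) z = (Pi.single i 1 : Fin (2 * n) → ℝ) k :=
  Xd_continuousLinearMap i ((ContinuousLinearMap.proj k).comp (ContinuousLinearMap.fst ℝ _ ℝ))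

lemma Xd_snd : Xd i Prod.snd z = 2 * (Jmat n *ᵥ z.1) i := by
  simp [Xd, fderiv_snd, Xvec]

lemma Xd_mulVec_fst (B : Matrix (Fin (2 * n)) (Fin (2 * n)) ℝ) (k : Fin (2 * n)) :
    Xd i (fun w => (B *ᵥ w.1) k) z = B k i := by
  let L : Hpt n →L[ℝ] ℝ := (ContinuousLinearMap.proj k).comp
    ((Matrix.mulVecLin B).toContinuousLinearMap.comp (ContinuousLinearMap.fst ℝ _ ℝ))
  calc Xd i (fun w => (B *ᵥ w.1) k) z = L (Xvec z.1 i) := Xd_continuousLinearMap i L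
    _ = B k i := by simp [L, Xvec]

lemma Xd_quadForm_fst {B : Matrix (Fin (2 * n)) (Fin (2 * n)) ℝ} (hB : B.IsSymm) :
    Xd i (fun w => B *ᵥ w.1 ⬝ᵥ w.1) z = 2 * (B *ᵥ z.1) i := by
  change Xd i (fun w => ∑ k, (B *ᵥ w.1) k * w.1 k) z = _
  rw [Xd_sum _ _ fun k _ => by fun_prop]
  simp (disch := fun_prop) only [Xd_mul, Xd_mulVec_fst, Xd_fst_apply]
  simp only [hB.apply i, mulVec, dotProduct, Pi.single_apply, mul_ite, mul_one, mul_zero,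
    Finset.sum_add_distrib, Finset.sum_ite_eq', Finset.mem_univ, if_true]
  ring

theorem Lop_comp (M : Matrix (Fin (2 * n)) (Fin (2 * n)) ℝ) {f f' : ℝ → ℝ} {f'' : ℝ}
    (hψ : Differentiable ℝ ψ) (hXψ : ∀ j, DifferentiableAt ℝ (Xd j ψ) z)
    (hf : ∀ᶠ w in 𝓝 z, HasDerivAt f (f' (ψ w)) (ψ w)) (hf' : HasDerivAt f' f'' (ψ z)) :
    Lop (fun _ => M) (fun w => f (ψ w)) z
      = f'' * (gradH ψ z ⬝ᵥ M *ᵥ gradH ψ z) + f' (ψ z) * Lop (fun _ => M) ψ z := by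
  have first (j) : Xd j (fun w => f (ψ w)) =ᶠ[𝓝 z] fun w => f' (ψ w) * Xd j ψ w :=
    hf.mono fun w hw => Xd_comp j hw (hψ w)
  have second (i j) : Xd i (Xd j fun w => f (ψ w)) z
      = f'' * Xd i ψ z * Xd j ψ z + f' (ψ z) * Xd i (Xd j ψ) z := by
    have hf'ψ : DifferentiableAt ℝ (fun w => f' (ψ w)) z := hf'.differentiableAt.comp z (hψ z)
    rw [Xd_congr i (first j), Xd_mul i hf'ψ (hXψ j), Xd_comp i hf' (hψ z)]
  simp only [Lop, second, gradH, dotProduct, mulVec, Finset.mul_sum, ← Finset.sum_add_distrib]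
  refine Finset.sum_congr rfl fun i _ => Finset.sum_congr rfl fun j _ => ?_
  ring

end HorizontalCalculus

section SumIdentities

variable {ι R : Type*} [Fintype ι] [CommSemiring R]

lemma sum_sum_mul_mul_eq_dotProduct_mulVec (A : Matrix ι ι R) (c d : ι → R) :
    ∑ i, ∑ j, A i j * (c i * d j) = c ⬝ᵥ A *ᵥ d := by
  simp only [dotProduct, mulVec, Finset.mul_sum]
  exact Finset.sum_congr rfl fun i _ => Finset.sum_congr rfl fun j _ => by ring

lemma sum_sum_mul_eq_trace_mul (A B : Matrix ι ι R) : ∑ i, ∑ j, A i j * B j i = (A * B).trace := by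
  simp [trace, mul_apply]

end SumIdentities

section Symplectic

variable {n : ℕ} {M : Matrix (Fin (2 * n)) (Fin (2 * n)) ℝ}

lemma Jmat_transpose : (Jmat n)ᵀ = -Jmat n := by
  ext i j
  have := i.isLt
  rw [transpose_apply, neg_apply]
  simp only [Jmat, of_apply]
  split_ifs <;> first | omega | norm_num

lemma dotProduct_Jmat_mulVec_self (x : Fin (2 * n) → ℝ) : x ⬝ᵥ Jmat n *ᵥ x = 0 := by
  have h := dotProduct_mulVec x (Jmat n) x
  rw [← mulVec_transpose, Jmat_transpose, neg_mulVec, neg_dotProduct,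
    dotProduct_comm (Jmat n *ᵥ x)] at h
  linarith

lemma trace_mul_Jmat (hM : M.IsSymm) : (M * Jmat n).trace = 0 := by
  have h := trace_transpose (M * Jmat n)
  rw [transpose_mul, Jmat_transpose, hM.eq, Matrix.neg_mul, trace_neg, trace_mul_comm] at h
  linarith

lemma inv_mulVec_dotProduct_mulVec_inv_mulVec (x : Fin (2 * n) → ℝ) (hdet : IsUnit M.det) :
    M⁻¹ *ᵥ x ⬝ᵥ M *ᵥ M⁻¹ *ᵥ x = M⁻¹ *ᵥ x ⬝ᵥ x := by
  rw [mulVec_mulVec, mul_nonsing_inv M hdet, one_mulVec]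

lemma inv_mulVec_dotProduct_mulVec_Jmat_mulVec (x : Fin (2 * n) → ℝ) (hM : M.IsSymm)
    (hdet : IsUnit M.det) :
    M⁻¹ *ᵥ x ⬝ᵥ M *ᵥ Jmat n *ᵥ x = 0 := by
  rw [dotProduct_mulVec, ← mulVec_transpose, hM.eq, mulVec_mulVec, mul_nonsing_inv M hdet,
    one_mulVec, dotProduct_Jmat_mulVec_self]

lemma Jmat_mulVec_dotProduct_mulVec_Jmat_mulVec (x : Fin (2 * n) → ℝ) (hsympl : IsSymplecticMat M) :
    Jmat n *ᵥ x ⬝ᵥ M *ᵥ Jmat n *ᵥ x = M⁻¹ *ᵥ x ⬝ᵥ x := by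
  rw [dotProduct_comm, dotProduct_mulVec, ← mulVec_transpose, mulVec_mulVec, mulVec_mulVec,
    hsympl]

end Symplectic

section PhiM

variable {n : ℕ} {M : Matrix (Fin (2 * n)) (Fin (2 * n)) ℝ}

lemma differentiable_phiM : Differentiable ℝ (phiM M) :=
  fun z => by unfold phiM; fun_prop

lemma Xd_phiM (hM : M.IsSymm) (j : Fin (2 * n)) (z : Hpt n) :
    Xd j (phiM M) z = 4 * (M⁻¹ *ᵥ z.1 ⬝ᵥ z.1) * (M⁻¹ *ᵥ z.1) j + 4 * z.2 * (Jmat n *ᵥ z.1) j := by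
  unfold phiM
  rw [Xd_add _ (by fun_prop) (by fun_prop), Xd_comp _ (hasDerivAt_pow 2 _) (by fun_prop),
    Xd_comp _ (hasDerivAt_pow 2 _) differentiableAt_snd, Xd_quadForm_fst _ hM.inv, Xd_snd]
  ring

lemma differentiable_Xd_phiM (hM : M.IsSymm) (j : Fin (2 * n)) : Differentiable ℝ (Xd j (phiM M)) :=
  fun z => by rw [funext (Xd_phiM hM j)]; fun_prop

lemma Xd_Xd_phiM (hM : M.IsSymm) (i j : Fin (2 * n)) (z : Hpt n) :
    Xd i (Xd j (phiM M)) z = 8 * (M⁻¹ *ᵥ z.1) i * (M⁻¹ *ᵥ z.1) j + 4 * (M⁻¹ *ᵥ z.1 ⬝ᵥ z.1) * M⁻¹ j i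
      + 8 * (Jmat n *ᵥ z.1) i * (Jmat n *ᵥ z.1) j + 4 * z.2 * Jmat n j i := by
  rw [funext (Xd_phiM hM j), Xd_add _ (by fun_prop) (by fun_prop),
    Xd_mul _ (by fun_prop) (by fun_prop), Xd_const_mul _ _ (by fun_prop),
    Xd_mul _ (by fun_prop) (by fun_prop),
    Xd_const_mul _ _ differentiableAt_snd, Xd_quadForm_fst _ hM.inv, Xd_snd, Xd_mulVec_fst,
    Xd_mulVec_fst]
  ring

lemma gradH_phiM_dotProduct_mulVec (hM : M.IsSymm) (hdet : IsUnit M.det)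
    (hsympl : IsSymplecticMat M) (z : Hpt n) :
    gradH (phiM M) z ⬝ᵥ M *ᵥ gradH (phiM M) z = 16 * phiM M z * (M⁻¹ *ᵥ z.1 ⬝ᵥ z.1) := by
  have hgrad : gradH (phiM M) z
      = (4 * (M⁻¹ *ᵥ z.1 ⬝ᵥ z.1)) • M⁻¹ *ᵥ z.1 + (4 * z.2) • Jmat n *ᵥ z.1 := by
    ext j
    simp [gradH, Xd_phiM hM]
  have hcross : Jmat n *ᵥ z.1 ⬝ᵥ M *ᵥ M⁻¹ *ᵥ z.1 = 0 := by
    rw [mulVec_mulVec, mul_nonsing_inv M hdet, one_mulVec, dotProduct_comm,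
      dotProduct_Jmat_mulVec_self]
  simp only [hgrad, mulVec_add, mulVec_smul, add_dotProduct, dotProduct_add, smul_dotProduct,
    dotProduct_smul, smul_eq_mul, inv_mulVec_dotProduct_mulVec_inv_mulVec _ hdet,
    inv_mulVec_dotProduct_mulVec_Jmat_mulVec _ hM hdet, hcross,
    Jmat_mulVec_dotProduct_mulVec_Jmat_mulVec _ hsympl, phiM]
  ring

lemma Lop_phiM (hM : M.IsSymm) (hdet : IsUnit M.det) (hsympl : IsSymplecticMat M) (z : Hpt n) :
    Lop (fun _ => M) (phiM M) z = (16 + 8 * n) * (M⁻¹ *ᵥ z.1 ⬝ᵥ z.1) := by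
  have expand (i j : Fin (2 * n)) : M i j * Xd i (Xd j (phiM M)) z
      = 8 * (M i j * ((M⁻¹ *ᵥ z.1) i * (M⁻¹ *ᵥ z.1) j))
        + 4 * (M⁻¹ *ᵥ z.1 ⬝ᵥ z.1) * (M i j * M⁻¹ j i)
        + 8 * (M i j * ((Jmat n *ᵥ z.1) i * (Jmat n *ᵥ z.1) j))
        + 4 * z.2 * (M i j * Jmat n j i) := by
    rw [Xd_Xd_phiM hM]
    ring
  simp only [Lop, expand, Finset.sum_add_distrib, ← Finset.mul_sum,
    sum_sum_mul_mul_eq_dotProduct_mulVec, sum_sum_mul_eq_trace_mul,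
    inv_mulVec_dotProduct_mulVec_inv_mulVec _ hdet, mul_nonsing_inv M hdet,
    Jmat_mulVec_dotProduct_mulVec_Jmat_mulVec _ hsympl, trace_mul_Jmat hM, trace_one]
  simp only [Fintype.card_fin, Nat.cast_mul, Nat.cast_ofNat, mul_zero, add_zero]
  ring

lemma phiM_pos (hpos : M.PosDef) {z : Hpt n} (hz : z ≠ 0) : 0 < phiM M z := by
  rcases eq_or_ne z.1 0 with hx | hx
  · have ht : z.2 ≠ 0 := fun ht => hz (Prod.ext hx ht)
    unfold phiM
    positivity
  · have hq : 0 < M⁻¹ *ᵥ z.1 ⬝ᵥ z.1 := by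
      simpa [dotProduct_comm] using hpos.inv.dotProduct_mulVec_pos hx
    unfold phiM
    positivity

theorem Lop_rpow_phiM (hpos : M.PosDef) (hsympl : IsSymplecticMat M) (r : ℝ) {z : Hpt n}
    (hz : z ≠ 0) :
    Lop (fun _ => M) (fun w => phiM M w ^ r) z
      = 8 * r * (2 * r + n) * (M⁻¹ *ᵥ z.1 ⬝ᵥ z.1) * phiM M z ^ (r - 1) := by
  have hM : M.IsSymm := by simpa using hpos.isHermitian
  have hdet : IsUnit M.det := (isUnit_iff_isUnit_det M).mp hpos.isUnit
  have hφ := phiM_pos hpos hz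
  have hf : ∀ᶠ w in 𝓝 z, HasDerivAt (fun s => s ^ r) (r * phiM M w ^ (r - 1)) (phiM M w) := by
    filter_upwards [isOpen_ne.mem_nhds hz] with w hw
    exact Real.hasDerivAt_rpow_const (Or.inl (phiM_pos hpos hw).ne')
  have hf' := (Real.hasDerivAt_rpow_const (p := r - 1) (Or.inl hφ.ne')).const_mul r
  rw [Lop_comp M differentiable_phiM (fun j => differentiable_Xd_phiM hM j z) hf hf',
    gradH_phiM_dotProduct_mulVec hM hdet hsympl, Lop_phiM hM hdet hsympl,
    Real.rpow_sub_one hφ.ne' (r - 1)]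
  field_simp
  ring

end PhiM

theorem stmt2_general (n : ℕ) (Q : ℝ) (hQ : Q = 2 * n + 2)
    (M : Matrix (Fin (2 * n)) (Fin (2 * n)) ℝ)
    (hpos : M.PosDef) (hsympl : IsSymplecticMat M)
    (Γ : Hpt n → ℝ) (hΓ : ∀ z : Hpt n, Γ z = phiM M z ^ (-(Q - 2) / 4 : ℝ)) :
    ∀ z : Hpt n, z ≠ 0 → Lop (fun _ => M) Γ z = 0 := by
  intro z hz
  rw [funext hΓ, Lop_rpow_phiM hpos hsympl _ hz, hQ]
  ring

/-- Remark 3.3. For a constant symmetric positive definite symplectic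
matrix `M`, the function `Γ_M = φ_M^{-(Q-2)/4}` satisfies `𝓛_M Γ_M = 0` away from the
origin, where `Q = 2n+2`. -/
theorem stmt2 (n : ℕ) (hn : 1 ≤ n) (Q : ℝ) (hQ : Q = 2 * n + 2)
    (M : Matrix (Fin (2 * n)) (Fin (2 * n)) ℝ)
    (hsymm : M.IsSymm) (hpos : M.PosDef) (hsympl : IsSymplecticMat M)
    (Γ : Hpt n → ℝ) (hΓ : ∀ z : Hpt n, Γ z = phiM M z ^ (-(Q - 2) / 4 : ℝ)) :
    ∀ z : Hpt n, z ≠ 0 → Lop (fun _ => M) Γ z = 0 :=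
  stmt2_general n Q hQ M hpos hsympl Γ hΓ

end
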